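/- Let F : (0, 1] → [0, ∞) be continuous and suppose there exist constants C₁, C₂ > 0 such that F(t) ≤ C₁ t for all t ∈ (0, 1] and F(t) ≤ C₂ t^2 + (1/3) t^3 ∫_t^1 s^{−4} F(s) ds for all t ∈ (0, 1]. Then there exists C₃ > 0 such that F(t) ≤ C₃ t^2 for all t ∈ (0, 1]. -/

import Mathlib

/-!
Feeding a bound `F(s) ≤ A s + B s²` into the integral inequality returns
`F(t) ≤ (A/6) t + (C₂ + B/3) t²`: the linear coefficient shrinks by a factor 6 while the
quadratic one has the fixed point `3 C₂ / 2`. Starting from `F(t) ≤ C₁ t` and iterating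
gives `F(t) ≤ C₁ 6⁻ⁿ t + (3/2) C₂ t²` for every `n`, and `n → ∞` leaves `F(t) ≤ (3/2) C₂ t²`.
-/

open MeasureTheory Set Filter

lemma integral_inv_pow_four_mul_linear_add_quadratic (A B : ℝ) {t : ℝ} (ht : 0 < t) :
    ∫ s in t..1, (s ^ 4)⁻¹ * (A * s + B * s ^ 2) = A / 2 * ((t ^ 2)⁻¹ - 1) + B * (t⁻¹ - 1) := by
  have hpos : ∀ s ∈ uIcc t 1, 0 < s := fun s hs => (lt_min ht one_pos).trans_le hs.1
  have hderiv : ∀ s ∈ uIcc t 1, HasDerivAt (fun s : ℝ => -(A / 2) * (s ^ 2)⁻¹ - B * s⁻¹)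
      ((s ^ 4)⁻¹ * (A * s + B * s ^ 2)) s := by
    intro s hs
    have hs := (hpos s hs).ne'
    refine ((((hasDerivAt_pow 2 s).fun_inv (pow_ne_zero 2 hs)).const_mul (-(A / 2))).fun_sub
      ((hasDerivAt_inv hs).const_mul B)).congr_deriv ?_
    field_simp
    ring
  have hcont : ContinuousOn (fun s : ℝ => (s ^ 4)⁻¹ * (A * s + B * s ^ 2)) (uIcc t 1) :=
    (continuousOn_inv₀.comp (continuousOn_pow 4) fun s hs => pow_ne_zero 4 (hpos s hs).ne').mul
      (by fun_prop)
  rw [intervalIntegral.integral_eq_sub_of_hasDerivAt hderiv hcont.intervalIntegrable]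
  simp only [one_pow, inv_one]
  ring

lemma integral_inv_pow_four_mul_le_of_le {F : ℝ → ℝ} (hFc : ContinuousOn F (Ioc 0 1)) {A B : ℝ}
    (hF : ∀ s ∈ Ioc (0 : ℝ) 1, F s ≤ A * s + B * s ^ 2) {t : ℝ} (ht : t ∈ Ioc (0 : ℝ) 1) :
    ∫ s in t..1, (s ^ 4)⁻¹ * F s ≤ A / 2 * ((t ^ 2)⁻¹ - 1) + B * (t⁻¹ - 1) := by
  have hsub : Icc t 1 ⊆ Ioc 0 1 := fun s hs => ⟨ht.1.trans_le hs.1, hs.2⟩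
  have hinv : ContinuousOn (fun s : ℝ => (s ^ 4)⁻¹) (Icc t 1) :=
    continuousOn_inv₀.comp (continuousOn_pow 4) fun s hs => pow_ne_zero 4 (hsub hs).1.ne'
  rw [← integral_inv_pow_four_mul_linear_add_quadratic A B ht.1]
  refine intervalIntegral.integral_mono_on ht.2 ?_ ?_ fun s hs => ?_
  · exact (hinv.mul (hFc.mono hsub)).intervalIntegrable_of_Icc ht.2
  · exact (hinv.mul (by fun_prop)).intervalIntegrable_of_Icc ht.2
  · exact mul_le_mul_of_nonneg_left (hF s (hsub hs)) (by positivity)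

lemma le_linear_add_quadratic_of_integral_bound {F : ℝ → ℝ} (hFc : ContinuousOn F (Ioc 0 1))
    {C A B : ℝ} (hA : 0 ≤ A) (hB : 0 ≤ B)
    (hF : ∀ t ∈ Ioc (0 : ℝ) 1, F t ≤ C * t ^ 2 + 1 / 3 * t ^ 3 * ∫ s in t..1, (s ^ 4)⁻¹ * F s)
    (hAB : ∀ t ∈ Ioc (0 : ℝ) 1, F t ≤ A * t + B * t ^ 2) :
    ∀ t ∈ Ioc (0 : ℝ) 1, F t ≤ A / 6 * t + (C + B / 3) * t ^ 2 := by
  intro t ht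
  have ht0 := ht.1
  have hint := integral_inv_pow_four_mul_le_of_le hFc hAB ht
  calc F t ≤ C * t ^ 2 + 1 / 3 * t ^ 3 * (A / 2 * ((t ^ 2)⁻¹ - 1) + B * (t⁻¹ - 1)) :=
        (hF t ht).trans (by gcongr)
    _ = A / 6 * t + (C + B / 3) * t ^ 2 - (A / 6 + B / 3) * t ^ 3 := by field_simp; ring
    _ ≤ A / 6 * t + (C + B / 3) * t ^ 2 := by
        have : 0 ≤ (A / 6 + B / 3) * t ^ 3 := by positivity
        linarith

lemma le_geometric_mul_add_quadratic {F : ℝ → ℝ} (hFc : ContinuousOn F (Ioc 0 1))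
    {C₁ C₂ : ℝ} (hC₁ : 0 ≤ C₁) (hC₂ : 0 ≤ C₂) (h₁ : ∀ t ∈ Ioc (0 : ℝ) 1, F t ≤ C₁ * t)
    (h₂ : ∀ t ∈ Ioc (0 : ℝ) 1, F t ≤ C₂ * t ^ 2 + 1 / 3 * t ^ 3 * ∫ s in t..1, (s ^ 4)⁻¹ * F s)
    (n : ℕ) : ∀ t ∈ Ioc (0 : ℝ) 1, F t ≤ C₁ * (1 / 6) ^ n * t + 3 / 2 * C₂ * t ^ 2 := by
  induction n with
  | zero =>
    intro t ht
    simpa using (h₁ t ht).trans (le_add_of_nonneg_right (by positivity))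
  | succ n ih =>
    have step := le_linear_add_quadratic_of_integral_bound hFc (by positivity) (by positivity) h₂ ih
    intro t ht
    convert step t ht using 2 <;> ring

theorem absorption_estimate_general (F : ℝ → ℝ)
    (hFc : ContinuousOn F (Set.Ioc (0 : ℝ) 1))
    (C₁ C₂ : ℝ) (hC₁ : 0 < C₁) (hC₂ : 0 < C₂)
    (h₁ : ∀ t ∈ Set.Ioc (0 : ℝ) 1, F t ≤ C₁ * t)
    (h₂ : ∀ t ∈ Set.Ioc (0 : ℝ) 1,
      F t ≤ C₂ * t ^ 2 + (1 / 3) * t ^ 3 * ∫ s in t..1, (s ^ 4)⁻¹ * F s) :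
    ∃ C₃ > 0, ∀ t ∈ Set.Ioc (0 : ℝ) 1, F t ≤ C₃ * t ^ 2 := by
  refine ⟨3 / 2 * C₂, by positivity, fun t ht => ?_⟩
  have hlim : Tendsto (fun n : ℕ => C₁ * (1 / 6 : ℝ) ^ n * t + 3 / 2 * C₂ * t ^ 2) atTop
      (nhds (3 / 2 * C₂ * t ^ 2)) := by
    have hgeom : Tendsto (fun n : ℕ => (1 / 6 : ℝ) ^ n) atTop (nhds 0) :=
      tendsto_pow_atTop_nhds_zero_of_lt_one (by norm_num) (by norm_num)
    simpa using ((hgeom.const_mul C₁).mul_const t).add_const (3 / 2 * C₂ * t ^ 2)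
  exact ge_of_tendsto hlim (Eventually.of_forall fun n =>
    le_geometric_mul_add_quadratic hFc hC₁.le hC₂.le h₁ h₂ n t ht)

/-- The absorption step: if `F : (0,1] → [0,∞)` is continuous, `F(t) ≤ C₁ t`, and
`F(t) ≤ C₂ t² + (1/3) t³ ∫_t^1 s⁻⁴ F(s) ds` for all `t ∈ (0,1]`, then there is `C₃ > 0`
with `F(t) ≤ C₃ t²` on `(0,1]`. -/
theorem absorption_estimate (F : ℝ → ℝ)
    (hFc : ContinuousOn F (Set.Ioc (0 : ℝ) 1))
    (hF0 : ∀ t ∈ Set.Ioc (0 : ℝ) 1, 0 ≤ F t)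
    (C₁ C₂ : ℝ) (hC₁ : 0 < C₁) (hC₂ : 0 < C₂)
    (h₁ : ∀ t ∈ Set.Ioc (0 : ℝ) 1, F t ≤ C₁ * t)
    (h₂ : ∀ t ∈ Set.Ioc (0 : ℝ) 1,
      F t ≤ C₂ * t ^ 2 + (1 / 3) * t ^ 3 * ∫ s in t..1, (s ^ 4)⁻¹ * F s) :
    ∃ C₃ > 0, ∀ t ∈ Set.Ioc (0 : ℝ) 1, F t ≤ C₃ * t ^ 2 :=
  absorption_estimate_general F hFc C₁ C₂ hC₁ hC₂ h₁ h₂
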